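/- arXiv:2603.11319 — 3 statements merged into one kernel-verified Lean document; each statement's English description precedes it below -/
import Mathlib

section
/- Fix p ≥ 1, α ≥ 1 and L > 0. There exist constants c > 0 and d₀ ≥ 1, depending only on p, α and L, such that the following holds for every integer d ≥ d₀. Let μ ∈ ℝ^d satisfy ‖μ‖ = 7√d, and let ψ : ℝ^d → [0,1] be an L-Lipschitz function with ψ(y) = 1 whenever ‖y‖ ≤ 4 and ψ(y) = 0 whenever ‖y‖ ≥ 5. Define the score estimate ŝ : ℝ^d → ℝ^d by ŝ(x) = −ψ(x/√d)·αx − (1 − ψ(x/√d))·(x − μ) (so that ŝ(x) = −αx for ‖x‖ ≤ 4√d and ŝ(x) = −(x − μ) for ‖x‖ ≥ 5√d). Then the L^p score estimation error satisfies (∫ ‖ŝ(x) + (x − μ)‖^p dN(μ, I_d)(x))^{1/p} ≤ e^{−c·d}. -/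
/-!
Write `ŝ(x) + (x - μ) = ψ(x/√d) • ((x - μ) - αx)`. This vanishes unless `‖x‖ < 5√d`, and there
`‖x - μ‖ ≥ 2√d` because `‖μ‖ = 7√d`, while its norm is at most `‖x - μ‖ + 5α√d`. Hence its `p`-th
power is bounded by `exp(2p² + 5αp√d - d/2) · exp(‖x - μ‖²/4)`, the factor `exp(-d/2)` being paid
for by half of the Gaussian-type weight `exp(‖x - μ‖²/4)`. Under `N(μ, I_d)` that weight has
integral `2^{d/2}`, so the `p`-th moment is at most `exp(2p² + 5αp√d - (1 - log 2) d/2)`, which is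
`≤ exp(-(1 - log 2) d/4)` for large `d`.
-/

open MeasureTheory

/-- The standard Gaussian probability measure `γ_d` on `ℝ^d`, given by its density
`(2π)^{-d/2} exp(-‖x‖²/2)` with respect to Lebesgue measure. -/
noncomputable def stdGaussian (d : ℕ) : Measure (EuclideanSpace ℝ (Fin d)) :=
  volume.withDensity fun x =>
    ENNReal.ofReal ((2 * Real.pi) ^ (-(d : ℝ) / 2) * Real.exp (-‖x‖ ^ 2 / 2))

open Filter Real

section Gaussian

variable {d : ℕ}

lemma toReal_stdGaussian_density (x : EuclideanSpace ℝ (Fin d)) :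
    (ENNReal.ofReal ((2 * π) ^ (-(d : ℝ) / 2) * exp (-‖x‖ ^ 2 / 2))).toReal
      = (2 * π) ^ (-(d : ℝ) / 2) * exp (-‖x‖ ^ 2 / 2) :=
  ENNReal.toReal_ofReal (by positivity)

lemma stdGaussian_density_mul_exp (a : ℝ) (x : EuclideanSpace ℝ (Fin d)) :
    (2 * π) ^ (-(d : ℝ) / 2) * exp (-‖x‖ ^ 2 / 2) * exp (a * ‖x‖ ^ 2)
      = (2 * π) ^ (-(d : ℝ) / 2) * exp (-(1 / 2 - a) * ‖x‖ ^ 2) := by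
  rw [mul_assoc, ← exp_add]
  ring_nf

lemma integrable_exp_mul_sq_norm_stdGaussian {a : ℝ} (ha : a < 1 / 2) :
    Integrable (fun x => exp (a * ‖x‖ ^ 2)) (stdGaussian d) := by
  rw [stdGaussian, integrable_withDensity_iff (by fun_prop)
    (ae_of_all _ fun _ => ENNReal.ofReal_lt_top)]
  simp_rw [toReal_stdGaussian_density, mul_comm (exp (_ * _)),
    stdGaussian_density_mul_exp]
  refine .const_mul (.of_integral_ne_zero ?_) _
  rw [GaussianFourier.integral_rexp_neg_mul_sq_norm (by linarith)]
  exact (rpow_pos_of_pos (div_pos pi_pos (by linarith)) _).ne'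

lemma integral_exp_mul_sq_norm_stdGaussian {a : ℝ} (ha : a < 1 / 2) :
    ∫ x, exp (a * ‖x‖ ^ 2) ∂stdGaussian d = (1 - 2 * a)⁻¹ ^ ((d : ℝ) / 2) := by
  rw [stdGaussian, integral_withDensity_eq_integral_toReal_smul (by fun_prop)
    (ae_of_all _ fun _ => ENNReal.ofReal_lt_top)]
  simp_rw [toReal_stdGaussian_density, smul_eq_mul, stdGaussian_density_mul_exp]
  rw [integral_const_mul, GaussianFourier.integral_rexp_neg_mul_sq_norm (by linarith),
    finrank_euclideanSpace_fin, neg_div, rpow_neg (by positivity), ← inv_rpow (by positivity),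
    ← mul_rpow (by positivity) (div_pos pi_pos (by linarith)).le]
  congr 1
  field_simp

lemma integral_map_add_le_of_le_exp_mul_sq_norm_sub {f : EuclideanSpace ℝ (Fin d) → ℝ}
    {μ : EuclideanSpace ℝ (Fin d)} {K a : ℝ} (ha : a < 1 / 2) (hf₀ : ∀ x, 0 ≤ f x)
    (hf : ∀ x, f x ≤ K * exp (a * ‖x - μ‖ ^ 2)) :
    ∫ x, f x ∂(stdGaussian d).map (· + μ) ≤ K * (1 - 2 * a)⁻¹ ^ ((d : ℝ) / 2) := by
  have hg : Continuous fun x : EuclideanSpace ℝ (Fin d) => K * exp (a * ‖x - μ‖ ^ 2) := by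
    fun_prop
  have hshift : AEMeasurable (· + μ) (stdGaussian d) := (measurable_add_const μ).aemeasurable
  have hg_int : Integrable (fun x => K * exp (a * ‖x - μ‖ ^ 2)) ((stdGaussian d).map (· + μ)) := by
    rw [integrable_map_measure hg.aestronglyMeasurable hshift]
    simpa [Function.comp_def] using (integrable_exp_mul_sq_norm_stdGaussian ha).const_mul K
  calc ∫ x, f x ∂(stdGaussian d).map (· + μ)
      ≤ ∫ x, K * exp (a * ‖x - μ‖ ^ 2) ∂(stdGaussian d).map (· + μ) :=
        integral_mono_of_nonneg (ae_of_all _ hf₀) hg_int (ae_of_all _ hf)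
    _ = K * (1 - 2 * a)⁻¹ ^ ((d : ℝ) / 2) := by
        rw [integral_map hshift hg.aestronglyMeasurable]
        simp only [add_sub_cancel_right]
        rw [integral_const_mul, integral_exp_mul_sq_norm_stdGaussian ha]

end Gaussian

lemma rpow_add_le_exp_of_four_mul_le_sq {p t s D : ℝ} (hp : 0 ≤ p) (ht : 0 ≤ t) (hs : 0 ≤ s)
    (hD : 4 * D ≤ t ^ 2) :
    (t + s) ^ p ≤ exp (2 * p ^ 2 + s * p - D / 2) * exp (t ^ 2 / 4) := by
  calc (t + s) ^ p ≤ exp (t + s) ^ p :=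
        rpow_le_rpow (by positivity) (by linarith [add_one_le_exp (t + s)]) hp
    _ = exp ((t + s) * p) := (exp_mul _ _).symm
    _ ≤ exp (2 * p ^ 2 + s * p - D / 2) * exp (t ^ 2 / 4) := by
        rw [← exp_add]
        gcongr
        -- `p t ≤ 2 p² + t²/8` and `D/2 ≤ t²/8`
        nlinarith [sq_nonneg (t - 4 * p)]

lemma rpow_norm_smul_sub_le {E : Type*} [NormedAddCommGroup E] [NormedSpace ℝ E]
    {p α S : ℝ} {μ x : E} {ψ : E → ℝ} (hp : 0 < p) (hα : 0 ≤ α) (hS : 0 < S)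
    (hμ : ‖μ‖ = 7 * S) (hψ : ψ (S⁻¹ • x) ∈ Set.Icc (0 : ℝ) 1)
    (hψ₀ : ∀ y, 5 ≤ ‖y‖ → ψ y = 0) :
    ‖ψ (S⁻¹ • x) • ((x - μ) - α • x)‖ ^ p
      ≤ exp (2 * p ^ 2 + 5 * α * S * p - S ^ 2 / 2) * exp (‖x - μ‖ ^ 2 / 4) := by
  by_cases h5 : 5 ≤ ‖S⁻¹ • x‖
  · rw [hψ₀ _ h5, zero_smul, norm_zero, zero_rpow hp.ne']
    positivity
  have hx : ‖x‖ ≤ 5 * S := by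
    rw [not_le, norm_smul, norm_inv, Real.norm_of_nonneg hS.le, inv_mul_lt_iff₀ hS] at h5
    linarith
  have hxμ : 2 * S ≤ ‖x - μ‖ := by linarith [norm_sub_norm_le μ x, norm_sub_rev x μ]
  have hnorm : ‖ψ (S⁻¹ • x) • ((x - μ) - α • x)‖ ≤ ‖x - μ‖ + 5 * α * S :=
    calc ‖ψ (S⁻¹ • x) • ((x - μ) - α • x)‖ = ψ (S⁻¹ • x) * ‖(x - μ) - α • x‖ := by
          rw [norm_smul, Real.norm_of_nonneg hψ.1]
      _ ≤ 1 * (‖x - μ‖ + α * ‖x‖) := by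
          refine mul_le_mul hψ.2 ?_ (norm_nonneg _) zero_le_one
          simpa [norm_smul, Real.norm_of_nonneg hα] using norm_sub_le (x - μ) (α • x)
      _ ≤ ‖x - μ‖ + 5 * α * S := by nlinarith
  calc ‖ψ (S⁻¹ • x) • ((x - μ) - α • x)‖ ^ p ≤ (‖x - μ‖ + 5 * α * S) ^ p :=
        rpow_le_rpow (norm_nonneg _) hnorm hp.le
    _ ≤ _ := rpow_add_le_exp_of_four_mul_le_sq hp.le (norm_nonneg _) (by positivity)
        (by nlinarith)

lemma eventually_add_mul_sqrt_le (a b : ℝ) {κ : ℝ} (hκ : 0 < κ) :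
    ∀ᶠ n : ℕ in atTop, a + b * √n ≤ κ * n := by
  have hn := tendsto_natCast_atTop_atTop (R := ℝ)
  filter_upwards [hn.eventually_ge_atTop (2 * a / κ),
    (tendsto_sqrt_atTop.comp hn).eventually_ge_atTop (2 * b / κ)] with n ha hb
  simp only [Function.comp_apply] at hb
  rw [div_le_iff₀ hκ] at ha hb
  have hsq : √(n : ℝ) * √n = n := mul_self_sqrt n.cast_nonneg
  have : b * √n ≤ κ * n / 2 := by
    nlinarith [sqrt_nonneg (n : ℝ), mul_le_mul_of_nonneg_right hb (sqrt_nonneg (n : ℝ))]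
  linarith

theorem stmt0_general (p α L : ℝ) (hp : 1 ≤ p) (hα : 1 ≤ α) :
    ∃ c > (0 : ℝ), ∃ d₀ : ℕ, 1 ≤ d₀ ∧
      ∀ d : ℕ, d₀ ≤ d →
      ∀ μ : EuclideanSpace ℝ (Fin d), ‖μ‖ = 7 * Real.sqrt d →
      ∀ ψ : EuclideanSpace ℝ (Fin d) → ℝ,
        (∀ x y, |ψ x - ψ y| ≤ L * ‖x - y‖) →
        (∀ y, ψ y ∈ Set.Icc (0 : ℝ) 1) →
        (∀ y, ‖y‖ ≤ 4 → ψ y = 1) →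
        (∀ y, 5 ≤ ‖y‖ → ψ y = 0) →
        ∀ sHat : EuclideanSpace ℝ (Fin d) → EuclideanSpace ℝ (Fin d),
          (∀ x, sHat x = -(ψ ((Real.sqrt d)⁻¹ • x) • (α • x))
              - (1 - ψ ((Real.sqrt d)⁻¹ • x)) • (x - μ)) →
          (∫ x, ‖sHat x + (x - μ)‖ ^ p ∂((stdGaussian d).map (· + μ))) ^ (1 / p)
            ≤ Real.exp (-c * d) := by
  have hp₀ : 0 < p := by linarith
  have hκ : 0 < (1 - log 2) / 4 := by linarith [log_two_lt_d9]
  set κ := (1 - log 2) / 4 with hκ_def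
  obtain ⟨d₀, hd₀⟩ := eventually_atTop.1 (eventually_add_mul_sqrt_le (2 * p ^ 2) (5 * α * p) hκ)
  refine ⟨κ / p, by positivity, max d₀ 1, le_max_right _ _, ?_⟩
  intro d hd μ hμ ψ _ hψ _ hψ₀ sHat hsHat
  have hS : 0 < √(d : ℝ) := sqrt_pos.2 (by exact_mod_cast (le_max_right _ _).trans hd)
  have herror : ∀ x, sHat x + (x - μ) = ψ ((√d)⁻¹ • x) • ((x - μ) - α • x) := fun x => by
    rw [hsHat x]
    module
  have hpointwise : ∀ x, ‖sHat x + (x - μ)‖ ^ p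
      ≤ exp (2 * p ^ 2 + 5 * α * √d * p - d / 2) * exp (1 / 4 * ‖x - μ‖ ^ 2) := fun x => by
    rw [herror, one_div_mul_eq_div]
    simpa only [sq_sqrt d.cast_nonneg] using
      rpow_norm_smul_sub_le (α := α) hp₀ (by linarith) hS hμ (hψ _) hψ₀
  have hmoment : ∫ x, ‖sHat x + (x - μ)‖ ^ p ∂(stdGaussian d).map (· + μ) ≤ exp (-κ * d) := by
    refine (integral_map_add_le_of_le_exp_mul_sq_norm_sub (by norm_num)
      (fun x => by positivity) hpointwise).trans ?_
    rw [show (1 - 2 * (1 / 4 : ℝ))⁻¹ = 2 by norm_num, rpow_def_of_pos two_pos, ← exp_add,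
      exp_le_exp]
    have := hd₀ d ((le_max_left _ _).trans hd)
    rw [hκ_def] at this ⊢
    linarith
  calc (∫ x, ‖sHat x + (x - μ)‖ ^ p ∂(stdGaussian d).map (· + μ)) ^ (1 / p)
      ≤ exp (-κ * d) ^ (1 / p) :=
        rpow_le_rpow (integral_nonneg fun _ => by positivity) hmoment (by positivity)
    _ = exp (-(κ / p) * d) := by
        rw [← exp_mul]
        ring_nf

/-- small `L^p` score-estimation error for the standard-normal-initialization
construction. -/
theorem stmt0 (p α L : ℝ) (hp : 1 ≤ p) (hα : 1 ≤ α) (hL : 0 < L) :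
    ∃ c > (0 : ℝ), ∃ d₀ : ℕ, 1 ≤ d₀ ∧
      ∀ d : ℕ, d₀ ≤ d →
      ∀ μ : EuclideanSpace ℝ (Fin d), ‖μ‖ = 7 * Real.sqrt d →
      ∀ ψ : EuclideanSpace ℝ (Fin d) → ℝ,
        (∀ x y, |ψ x - ψ y| ≤ L * ‖x - y‖) →
        (∀ y, ψ y ∈ Set.Icc (0 : ℝ) 1) →
        (∀ y, ‖y‖ ≤ 4 → ψ y = 1) →
        (∀ y, 5 ≤ ‖y‖ → ψ y = 0) →
        ∀ sHat : EuclideanSpace ℝ (Fin d) → EuclideanSpace ℝ (Fin d),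
          (∀ x, sHat x = -(ψ ((Real.sqrt d)⁻¹ • x) • (α • x))
              - (1 - ψ ((Real.sqrt d)⁻¹ • x)) • (x - μ)) →
          (∫ x, ‖sHat x + (x - μ)‖ ^ p ∂((stdGaussian d).map (· + μ))) ^ (1 / p)
            ≤ Real.exp (-c * d) :=
  stmt0_general p α L hp hα
end

section
/- Fix α ≥ 1 and L > 0. There exists a constant K > 0 depending only on α and L (in particular independent of d and μ) such that for every integer d ≥ 1, every μ ∈ ℝ^d with ‖μ‖ = 7√d, and every differentiable L-Lipschitz function ψ : ℝ^d → [0,1] with ψ(y) = 1 whenever ‖y‖ ≤ 4 and ψ(y) = 0 whenever ‖y‖ ≥ 5, the map ŝ : ℝ^d → ℝ^d defined by ŝ(x) = −ψ(x/√d)·αx − (1 − ψ(x/√d))·(x − μ) is K-Lipschitz on all of ℝ^d. -/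
/-- the score estimate of the standard-normal-initialization construction is
`K`-Lipschitz with `K` depending only on `α` and `L`. -/
theorem stmt1 (α L : ℝ) (hα : 1 ≤ α) (hL : 0 < L) :
    ∃ K > (0 : ℝ),
      ∀ d : ℕ, 1 ≤ d →
      ∀ μ : EuclideanSpace ℝ (Fin d), ‖μ‖ = 7 * Real.sqrt d →
      ∀ ψ : EuclideanSpace ℝ (Fin d) → ℝ,
        Differentiable ℝ ψ →
        (∀ x y, |ψ x - ψ y| ≤ L * ‖x - y‖) →
        (∀ y, ψ y ∈ Set.Icc (0 : ℝ) 1) →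
        (∀ y, ‖y‖ ≤ 4 → ψ y = 1) →
        (∀ y, 5 ≤ ‖y‖ → ψ y = 0) →
        ∀ sHat : EuclideanSpace ℝ (Fin d) → EuclideanSpace ℝ (Fin d),
          (∀ x, sHat x = -(ψ ((Real.sqrt d)⁻¹ • x) • (α • x))
              - (1 - ψ ((Real.sqrt d)⁻¹ • x)) • (x - μ)) →
          ∀ x y : EuclideanSpace ℝ (Fin d), ‖sHat x - sHat y‖ ≤ K * ‖x - y‖ := by
  refine ⟨α + L * (5 * α + 2), by positivity, ?_⟩
  intro d hd μ hμ ψ hdiff hlip hicc h1 h0 sHat hs x y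
  set s : ℝ := Real.sqrt d with hsdef
  have hs1 : 1 ≤ s := by
    rw [hsdef]
    rw [show (1:ℝ) = Real.sqrt 1 by simp]
    exact Real.sqrt_le_sqrt (by exact_mod_cast hd)
  have hs0 : 0 < s := lt_of_lt_of_le one_pos hs1
  have key : ∀ a b : EuclideanSpace ℝ (Fin d), ‖b‖ ≤ ‖a‖ →
      ‖sHat a - sHat b‖ ≤ (α + L * (5 * α + 2)) * ‖a - b‖ := by
    intro a b hab
    set A := ψ (s⁻¹ • a) with hA
    set B := ψ (s⁻¹ • b) with hB
    have hid : sHat a - sHat b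
        = ((1 - α) * A - 1) • (a - b) + (A - B) • ((1 - α) • b - μ) := by
      rw [hs a, hs b]; module
    have hAicc := hicc (s⁻¹ • a)
    have hBicc := hicc (s⁻¹ • b)
    rw [hid]
    calc ‖((1 - α) * A - 1) • (a - b) + (A - B) • ((1 - α) • b - μ)‖
        ≤ |(1 - α) * A - 1| * ‖a - b‖ + |A - B| * ‖(1 - α) • b - μ‖ := by
          refine (norm_add_le _ _).trans ?_
          rw [norm_smul, norm_smul, Real.norm_eq_abs, Real.norm_eq_abs]
      _ ≤ α * ‖a - b‖ + L * (5 * α + 2) * ‖a - b‖ := by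
          gcongr ?_ * _ + ?_
          · rcases hAicc with ⟨h01, h02⟩
            rw [abs_le]
            constructor <;> nlinarith
          · -- bound the second product
            rcases le_or_gt ‖b‖ (5 * s) with hb | hb
            · have hab' : |A - B| ≤ L * (s⁻¹ * ‖a - b‖) := by
                have := hlip (s⁻¹ • a) (s⁻¹ • b)
                rwa [← smul_sub, norm_smul, Real.norm_eq_abs,
                  abs_of_nonneg (le_of_lt (inv_pos.mpr hs0))] at this
              have hw : ‖(1 - α) • b - μ‖ ≤ (5 * α + 2) * s := by
                calc ‖(1 - α) • b - μ‖ ≤ ‖(1 - α) • b‖ + ‖μ‖ := norm_sub_le _ _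
                  _ = |1 - α| * ‖b‖ + 7 * s := by
                      rw [norm_smul, Real.norm_eq_abs, hμ, hsdef]
                  _ ≤ (α - 1) * (5 * s) + 7 * s := by
                      rw [abs_of_nonpos (by linarith)]
                      have : -(1 - α) * ‖b‖ ≤ (α - 1) * (5 * s) := by
                        nlinarith [norm_nonneg b]
                      linarith
                  _ = (5 * α + 2) * s := by ring
              calc |A - B| * ‖(1 - α) • b - μ‖
                  ≤ (L * (s⁻¹ * ‖a - b‖)) * ((5 * α + 2) * s) := by
                    apply mul_le_mul hab' hw (norm_nonneg _)
                    positivity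
                _ = L * (5 * α + 2) * ‖a - b‖ := by
                    field_simp
            · have hB0 : B = 0 := by
                apply h0
                rw [norm_smul, Real.norm_eq_abs, abs_of_nonneg (le_of_lt (inv_pos.mpr hs0))]
                rw [le_inv_mul_iff₀ hs0]
                linarith
              have hA0 : A = 0 := by
                apply h0
                rw [norm_smul, Real.norm_eq_abs, abs_of_nonneg (le_of_lt (inv_pos.mpr hs0))]
                rw [le_inv_mul_iff₀ hs0]
                linarith
              rw [hA0, hB0, sub_zero, abs_zero, zero_mul]
              positivity
      _ = (α + L * (5 * α + 2)) * ‖a - b‖ := by ring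
  rcases le_total ‖y‖ ‖x‖ with h | h
  · exact key x y h
  · have := key y x h
    rwa [norm_sub_rev (sHat y), norm_sub_rev y] at this
end

section
/- Fix p ≥ 1, α ≥ 1 and an integer k ≥ 1. There exist constants c > 0 and d₀ ≥ 1, depending only on p, α and k, such that the following holds for every integer d ≥ d₀, every integer n with 1 ≤ n ≤ d^k, and all points x_1, …, x_n ∈ ℝ^d in general position. Let ŝ : ℝ^d → ℝ^d be any measurable map such that ŝ(x) = −x whenever ‖x − x_i‖ ≥ 0.16√d for all i, and such that whenever ‖x − x_i‖ < 0.16√d for some (necessarily unique) index i, ŝ(x) = −λ·α(x − x_i) − (1 − λ)·x for some λ = λ(x) ∈ [0,1]. Then (∫ ‖ŝ(x) + x‖^p dγ_d(x))^{1/p} ≤ e^{−c·d}. -/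
open MeasureTheory Real

/-- Points `x 1, …, x n ∈ ℝ^d` are in general position if `‖x i − x j‖ ≥ 0.4√d` for all
`i ≠ j`, and `0.5√d ≤ ‖x i‖ ≤ 2√d` for all `i`. -/
def GeneralPosition {d n : ℕ} (x : Fin n → EuclideanSpace ℝ (Fin d)) : Prop :=
  (∀ i j, i ≠ j → 0.4 * Real.sqrt d ≤ ‖x i - x j‖) ∧
  (∀ i, 0.5 * Real.sqrt d ≤ ‖x i‖ ∧ ‖x i‖ ≤ 2 * Real.sqrt d)

lemma gauss_meas (d : ℕ) : Measurable fun x : EuclideanSpace ℝ (Fin d) =>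
    ENNReal.ofReal ((2 * Real.pi) ^ (-(d : ℝ) / 2) * Real.exp (-‖x‖ ^ 2 / 2)) := by
  fun_prop

lemma gauss_integrable (d : ℕ) :
    Integrable (fun x : EuclideanSpace ℝ (Fin d) =>
      (2 * Real.pi) ^ (-(d : ℝ) / 2) * Real.exp (-‖x‖ ^ 2 / 2)) := by
  apply Integrable.const_mul
  have h := (GaussianFourier.integrable_cexp_neg_mul_sq_norm_add (V := EuclideanSpace ℝ (Fin d))
    (b := (1/2 : ℂ)) (by norm_num) 0 0).norm
  apply h.congr
  apply Filter.Eventually.of_forall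
  intro v
  simp [Complex.norm_exp]
  norm_num
  ring_nf
  norm_cast

lemma gauss_integral (d : ℕ) :
    ∫ x : EuclideanSpace ℝ (Fin d), (2 * Real.pi) ^ (-(d : ℝ) / 2) * Real.exp (-‖x‖ ^ 2 / 2) = 1 := by
  rw [integral_const_mul]
  have h := GaussianFourier.integral_rexp_neg_mul_sq_norm (V := EuclideanSpace ℝ (Fin d)) (b := (1/2 : ℝ)) (by norm_num)
  simp only [finrank_euclideanSpace_fin] at h
  have : (fun v : EuclideanSpace ℝ (Fin d) => rexp (-(1/2) * ‖v‖^2)) =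
      fun v : EuclideanSpace ℝ (Fin d) => rexp (-‖v‖^2/2) := by ext v; ring_nf
  rw [this] at h
  rw [h]
  have h2 : π / (1/2 : ℝ) = 2 * π := by ring
  rw [h2, ← Real.rpow_add (by positivity)]
  have h3 : -(d:ℝ)/2 + (d:ℝ)/2 = 0 := by ring
  rw [h3, Real.rpow_zero]

lemma gauss_univ (d : ℕ) : stdGaussian d Set.univ = 1 := by
  rw [stdGaussian, withDensity_apply _ MeasurableSet.univ, Measure.restrict_univ,
    ← ofReal_integral_eq_lintegral_ofReal (gauss_integrable d)
      (Filter.Eventually.of_forall fun x => by positivity), gauss_integral]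
  simp

lemma gauss_ball (d : ℕ) (z : EuclideanSpace ℝ (Fin d)) (hz : 0.5 * Real.sqrt d ≤ ‖z‖) :
    stdGaussian d (Metric.ball z (0.16 * Real.sqrt d)) ≤ ENNReal.ofReal (rexp (-0.045 * d)) := by
  set f : EuclideanSpace ℝ (Fin d) → ℝ := fun x =>
    (2 * Real.pi) ^ (-(d : ℝ) / 2) * Real.exp (-‖x‖ ^ 2 / 2) with hf
  set B := Metric.ball z (0.16 * Real.sqrt d) with hB
  have hsd : Real.sqrt d ^ 2 = (d : ℝ) := Real.sq_sqrt (Nat.cast_nonneg d)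
  have key : ∀ y ∈ B, ENNReal.ofReal (f y) ≤
      ENNReal.ofReal (rexp (-0.045 * d)) * ENNReal.ofReal (f (y - z)) := by
    intro y hy
    rw [← ENNReal.ofReal_mul (by positivity)]
    apply ENNReal.ofReal_le_ofReal
    have hyz : ‖y - z‖ < 0.16 * Real.sqrt d := by
      rw [← dist_eq_norm]; exact hy
    have hyn : 0.34 * Real.sqrt d ≤ ‖y‖ := by
      have h1 := norm_sub_norm_le z y
      have h2 : ‖z - y‖ = ‖y - z‖ := norm_sub_rev _ _
      nlinarith [norm_nonneg (y - z)]
    have hyzn : (0 : ℝ) ≤ ‖y - z‖ := norm_nonneg _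
    have hexp : rexp (-‖y‖ ^ 2 / 2) ≤ rexp (-0.045 * d) * rexp (-‖y - z‖ ^ 2 / 2) := by
      rw [← Real.exp_add]
      apply Real.exp_le_exp.2
      nlinarith [Real.sqrt_nonneg (d : ℝ)]
    simp only [hf]
    calc (2 * π) ^ (-(d : ℝ) / 2) * rexp (-‖y‖ ^ 2 / 2)
        ≤ (2 * π) ^ (-(d : ℝ) / 2) * (rexp (-0.045 * d) * rexp (-‖y - z‖ ^ 2 / 2)) := by
          apply mul_le_mul_of_nonneg_left hexp (by positivity)
      _ = rexp (-0.045 * d) * ((2 * π) ^ (-(d : ℝ) / 2) * rexp (-‖y - z‖ ^ 2 / 2)) := by ring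
  have hmeas : Measurable fun y : EuclideanSpace ℝ (Fin d) =>
      ENNReal.ofReal (rexp (-0.045 * d)) * ENNReal.ofReal (f (y - z)) := by
    fun_prop
  calc stdGaussian d B = ∫⁻ y in B, ENNReal.ofReal (f y) ∂volume := by
        rw [stdGaussian, withDensity_apply _ measurableSet_ball]
    _ ≤ ∫⁻ y in B, ENNReal.ofReal (rexp (-0.045 * d)) * ENNReal.ofReal (f (y - z)) ∂volume :=
        setLIntegral_mono hmeas key
    _ ≤ ∫⁻ y, ENNReal.ofReal (rexp (-0.045 * d)) * ENNReal.ofReal (f (y - z)) ∂volume :=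
        setLIntegral_le_lintegral _ _
    _ = ENNReal.ofReal (rexp (-0.045 * d)) * ∫⁻ y, ENNReal.ofReal (f (y - z)) ∂volume := by
        rw [lintegral_const_mul _ (by fun_prop)]
    _ = ENNReal.ofReal (rexp (-0.045 * d)) * ∫⁻ y, ENNReal.ofReal (f y) ∂volume := by
        congr 1
        have : ∀ y : EuclideanSpace ℝ (Fin d), y - z = y + (-z) := fun y => sub_eq_add_neg y z
        simp_rw [this]
        exact lintegral_add_right_eq_self (fun y => ENNReal.ofReal (f y)) (-z)
    _ = ENNReal.ofReal (rexp (-0.045 * d)) * stdGaussian d Set.univ := by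
        rw [stdGaussian, withDensity_apply _ MeasurableSet.univ, Measure.restrict_univ]
    _ ≤ ENNReal.ofReal (rexp (-0.045 * d)) := by
        rw [gauss_univ, mul_one]

lemma rpow_aux (p A B C : ℝ) (hp : 0 < p) (hA : 0 ≤ A) (hB : 0 ≤ B) (hC : 0 ≤ C) :
    (A ^ p * (B * C)) ^ (1 / p) = A * (B ^ (1 / p) * C ^ (1 / p)) := by
  rw [Real.mul_rpow (Real.rpow_nonneg hA p) (by positivity), Real.mul_rpow hB hC,
    ← Real.rpow_mul hA, mul_one_div_cancel (ne_of_gt hp), Real.rpow_one]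

set_option maxHeartbeats 1000000 in
/-- small `L^p` score-estimation error for the data-based-initialization
construction. -/
theorem stmt3 (p α : ℝ) (k : ℕ) (hp : 1 ≤ p) (hα : 1 ≤ α) (hk : 1 ≤ k) :
    ∃ c > (0 : ℝ), ∃ d₀ : ℕ, 1 ≤ d₀ ∧
      ∀ d : ℕ, d₀ ≤ d →
      ∀ n : ℕ, 1 ≤ n → (n : ℝ) ≤ (d : ℝ) ^ k →
      ∀ x : Fin n → EuclideanSpace ℝ (Fin d), GeneralPosition x →
      ∀ sHat : EuclideanSpace ℝ (Fin d) → EuclideanSpace ℝ (Fin d),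
        Measurable sHat →
        (∀ y, (∀ i, 0.16 * Real.sqrt d ≤ ‖y - x i‖) → sHat y = -y) →
        (∀ y, ∀ i, ‖y - x i‖ < 0.16 * Real.sqrt d →
          ∃ l ∈ Set.Icc (0 : ℝ) 1,
            sHat y = -(l • (α • (y - x i))) - (1 - l) • y) →
        (∫ y, ‖sHat y + y‖ ^ p ∂(stdGaussian d)) ^ (1 / p) ≤ Real.exp (-c * d) := by
  have hp0 : (0 : ℝ) < p := lt_of_lt_of_le one_pos hp
  set c : ℝ := 0.045 / (2 * p) with hc
  have hcpos : 0 < c := by positivity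
  refine ⟨c, hcpos, ?_⟩
  -- the growth condition holds eventually
  have hev : ∀ᶠ X : ℝ in Filter.atTop, 3 * α * X ^ ((k : ℝ) + 1) ≤ rexp (c * X) := by
    have t := tendsto_exp_mul_div_rpow_atTop ((k : ℝ) + 1) c hcpos
    filter_upwards [t.eventually_ge_atTop (3 * α), Filter.eventually_ge_atTop (1 : ℝ)]
      with X h1 h2
    have hX : (0 : ℝ) < X ^ ((k : ℝ) + 1) := Real.rpow_pos_of_pos (by linarith) _
    rw [le_div_iff₀ hX] at h1
    linarith
  have hevn : ∀ᶠ d : ℕ in Filter.atTop,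
      (1 ≤ d ∧ 3 * α * (d : ℝ) ^ ((k : ℝ) + 1) ≤ rexp (c * d)) := by
    filter_upwards [Filter.eventually_ge_atTop 1,
      tendsto_natCast_atTop_atTop.eventually hev] with d h1 h2
    exact ⟨h1, h2⟩
  obtain ⟨d₀, hd₀⟩ := Filter.eventually_atTop.1 hevn
  refine ⟨max d₀ 1, le_max_right _ _, ?_⟩
  intro d hd n hn hnk x hgp sHat hsmeas hfar hnear
  obtain ⟨hd1, hgrow⟩ := hd₀ d (le_trans (le_max_left _ _) hd)
  haveI : IsProbabilityMeasure (stdGaussian d) := ⟨gauss_univ d⟩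
  have hd1R : (1 : ℝ) ≤ (d : ℝ) := by exact_mod_cast hd1
  have hsd : Real.sqrt d ^ 2 = (d : ℝ) := Real.sq_sqrt (Nat.cast_nonneg d)
  have hsd0 : (0 : ℝ) ≤ Real.sqrt d := Real.sqrt_nonneg _
  have hsd1 : (1 : ℝ) ≤ Real.sqrt d := Real.one_le_sqrt.2 hd1R
  have hsdd : Real.sqrt d ≤ (d : ℝ) := by nlinarith
  set r : ℝ := 0.16 * Real.sqrt d with hr
  set M : ℝ := 3 * α * Real.sqrt d with hM
  have hM0 : (0 : ℝ) ≤ M := by positivity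
  set S : Set (EuclideanSpace ℝ (Fin d)) := ⋃ i, Metric.ball (x i) r with hS
  have hSmeas : MeasurableSet S := MeasurableSet.iUnion fun i => measurableSet_ball
  -- pointwise bound
  have hpt : ∀ y, ‖sHat y + y‖ ^ p ≤ S.indicator (fun _ => M ^ p) y := by
    intro y
    by_cases hy : y ∈ S
    · rw [Set.indicator_of_mem hy]
      obtain ⟨i, hi⟩ := Set.mem_iUnion.1 hy
      have hyi : ‖y - x i‖ < r := by rw [← dist_eq_norm]; exact hi
      obtain ⟨l, ⟨hl0, hl1⟩, hsy⟩ := hnear y i hyi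
      have hrew : sHat y + y = (-(l * α)) • (y - x i) + l • y := by
        rw [hsy]; module
      have hnb : ‖sHat y + y‖ ≤ M := by
        rw [hrew]
        have h1 : ‖(-(l * α)) • (y - x i)‖ = |(-(l * α))| * ‖y - x i‖ := by
          rw [norm_smul, Real.norm_eq_abs]
        have h2 : ‖l • y‖ = |l| * ‖y‖ := by rw [norm_smul, Real.norm_eq_abs]
        have hal : |(-(l * α))| = l * α := by
          rw [abs_neg, abs_of_nonneg (by nlinarith)]
        have hll : |l| = l := abs_of_nonneg hl0
        have hyn : ‖y‖ ≤ 2 * Real.sqrt d + r := by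
          have := (hgp.2 i).2
          have h4 : ‖y - x i‖ ≤ r := le_of_lt hyi
          calc ‖y‖ = ‖x i + (y - x i)‖ := by rw [show x i + (y - x i) = y by abel]
            _ ≤ ‖x i‖ + ‖y - x i‖ := norm_add_le _ _
            _ ≤ 2 * Real.sqrt d + r := by linarith
        calc ‖(-(l * α)) • (y - x i) + l • y‖
            ≤ ‖(-(l * α)) • (y - x i)‖ + ‖l • y‖ := norm_add_le _ _
          _ = l * α * ‖y - x i‖ + l * ‖y‖ := by rw [h1, h2, hal, hll]
          _ ≤ M := by
              have hyi' : ‖y - x i‖ ≤ r := le_of_lt hyi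
              have hn0 : (0:ℝ) ≤ ‖y - x i‖ := norm_nonneg _
              have hy0 : (0:ℝ) ≤ ‖y‖ := norm_nonneg _
              have e1 : l * ‖y - x i‖ ≤ 0.16 * Real.sqrt d :=
                le_trans (mul_le_of_le_one_left hn0 hl1) (le_of_lt hyi)
              have e2 : l * ‖y‖ ≤ 2 * Real.sqrt d + r := le_trans (mul_le_of_le_one_left hy0 hl1) hyn
              have e3 : α * (l * ‖y - x i‖) ≤ α * (0.16 * Real.sqrt d) :=
                mul_le_mul_of_nonneg_left e1 (le_trans zero_le_one hα)
              rw [hM, hr] at *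
              nlinarith
      exact Real.rpow_le_rpow (norm_nonneg _) hnb (le_of_lt hp0)
    · rw [Set.indicator_of_notMem hy]
      have hyf : ∀ i, r ≤ ‖y - x i‖ := by
        intro i
        by_contra hcon
        push_neg at hcon
        exact hy (Set.mem_iUnion.2 ⟨i, by rw [Metric.mem_ball, dist_eq_norm]; exact hcon⟩)
      rw [hfar y hyf]
      simp [Real.zero_rpow (ne_of_gt hp0)]
  -- measure bound
  have hmb : (stdGaussian d) S ≤ ENNReal.ofReal ((n : ℝ) * rexp (-0.045 * d)) := by
    calc (stdGaussian d) S ≤ ∑' i : Fin n, (stdGaussian d) (Metric.ball (x i) r) :=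
          measure_iUnion_le _
      _ ≤ ∑' _i : Fin n, ENNReal.ofReal (rexp (-0.045 * d)) :=
          ENNReal.tsum_le_tsum fun i => gauss_ball d (x i) (hgp.2 i).1
      _ = (n : ENNReal) * ENNReal.ofReal (rexp (-0.045 * d)) := by
          rw [tsum_fintype]; simp [Finset.sum_const, mul_comm]
      _ = ENNReal.ofReal ((n : ℝ) * rexp (-0.045 * d)) := by
          rw [ENNReal.ofReal_mul (by positivity), ENNReal.ofReal_natCast]
  have htr : ((stdGaussian d) S).toReal ≤ (n : ℝ) * rexp (-0.045 * d) := by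
    have h := ENNReal.toReal_mono ENNReal.ofReal_ne_top hmb
    rwa [ENNReal.toReal_ofReal (by positivity)] at h
  -- integral bound
  have hint : ∫ y, ‖sHat y + y‖ ^ p ∂(stdGaussian d) ≤ M ^ p * ((n : ℝ) * rexp (-0.045 * d)) := by
    have hInd : Integrable (S.indicator fun _ => M ^ p) (stdGaussian d) :=
      (integrable_const _).indicator hSmeas
    calc ∫ y, ‖sHat y + y‖ ^ p ∂(stdGaussian d)
        ≤ ∫ y, S.indicator (fun _ => M ^ p) y ∂(stdGaussian d) :=
          integral_mono_of_nonneg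
            (Filter.Eventually.of_forall fun y => Real.rpow_nonneg (norm_nonneg _) p)
            hInd (Filter.Eventually.of_forall hpt)
      _ = ((stdGaussian d) S).toReal • (M ^ p) := integral_indicator_const _ hSmeas
      _ ≤ M ^ p * ((n : ℝ) * rexp (-0.045 * d)) := by
          rw [smul_eq_mul, mul_comm]
          exact mul_le_mul_of_nonneg_left htr (Real.rpow_nonneg hM0 p)
  -- putting it together
  have hI0 : 0 ≤ ∫ y, ‖sHat y + y‖ ^ p ∂(stdGaussian d) :=
    integral_nonneg fun y => Real.rpow_nonneg (norm_nonneg _) p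
  have hstep : (∫ y, ‖sHat y + y‖ ^ p ∂(stdGaussian d)) ^ (1 / p)
      ≤ (M ^ p * ((n : ℝ) * rexp (-0.045 * d))) ^ (1 / p) :=
    Real.rpow_le_rpow hI0 hint (by positivity)
  have hrhs : (M ^ p * ((n : ℝ) * rexp (-0.045 * d))) ^ (1 / p)
      = M * ((n : ℝ) ^ (1 / p) * rexp (-0.045 * d) ^ (1 / p)) :=
    rpow_aux p M (n : ℝ) _ hp0 hM0 (by positivity) (by positivity)
  have hexp1 : rexp (-0.045 * d) ^ (1 / p) = rexp (-0.045 * d * (1 / p)) :=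
    (Real.exp_mul _ _).symm
  have hn1 : (1 : ℝ) ≤ (n : ℝ) := by exact_mod_cast hn
  have hnp : (n : ℝ) ^ (1 / p) ≤ (d : ℝ) ^ k := by
    calc (n : ℝ) ^ (1 / p) ≤ (n : ℝ) ^ (1 : ℝ) :=
          Real.rpow_le_rpow_of_exponent_le hn1 (by rw [div_le_one hp0]; exact hp)
      _ = (n : ℝ) := Real.rpow_one _
      _ ≤ (d : ℝ) ^ k := hnk
  have hcast : (d : ℝ) ^ ((k : ℝ) + 1) = (d : ℝ) ^ (k + 1) := by
    rw [show ((k : ℝ) + 1) = ((k + 1 : ℕ) : ℝ) by push_cast; ring, Real.rpow_natCast]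
  have hdk0 : (0 : ℝ) ≤ (d : ℝ) ^ k := by positivity
  have h6 : M * (d : ℝ) ^ k ≤ 3 * α * (d : ℝ) ^ ((k : ℝ) + 1) := by
    rw [hcast, pow_succ]
    rw [hM]
    nlinarith [mul_le_mul_of_nonneg_left hsdd (show (0:ℝ) ≤ 3 * α * (d:ℝ)^k by positivity)]
  have hexp0 : (0 : ℝ) ≤ rexp (-0.045 * d * (1 / p)) := le_of_lt (Real.exp_pos _)
  calc (∫ y, ‖sHat y + y‖ ^ p ∂(stdGaussian d)) ^ (1 / p)
      ≤ (M ^ p * ((n : ℝ) * rexp (-0.045 * d))) ^ (1 / p) := hstep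
    _ = M * ((n : ℝ) ^ (1 / p) * rexp (-0.045 * d * (1 / p))) := by rw [hrhs, hexp1]
    _ ≤ M * ((d : ℝ) ^ k * rexp (-0.045 * d * (1 / p))) := by
        apply mul_le_mul_of_nonneg_left _ hM0
        exact mul_le_mul_of_nonneg_right hnp hexp0
    _ = (M * (d : ℝ) ^ k) * rexp (-0.045 * d * (1 / p)) := by ring
    _ ≤ (3 * α * (d : ℝ) ^ ((k : ℝ) + 1)) * rexp (-0.045 * d * (1 / p)) :=
        mul_le_mul_of_nonneg_right h6 hexp0
    _ ≤ rexp (c * d) * rexp (-0.045 * d * (1 / p)) :=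
        mul_le_mul_of_nonneg_right hgrow hexp0
    _ = rexp (-c * d) := by
        rw [← Real.exp_add]
        congr 1
        rw [hc]
        field_simp
        ring
end
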